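/- arXiv:2011.08118 — 2 statements merged into one kernel-verified Lean document; each statement's English description precedes it below -/
import Mathlib

section
/- The tower decomposition into biprimes is unique: if two lists of biprime numbers (all entries > 1) have equal tower exponentiation values, then the lists are equal. -/
def Biprime (n : ℕ) : Prop := 1 < n ∧ ¬ ∃ a b : ℕ, 1 < a ∧ 1 < b ∧ a ^ b = n

def tower : List ℕ → ℕ
  | [] => 1
  | a :: l => a ^ tower l

/-!
If `a ^ x = b ^ y`, then `a` and `b` are powers of a common base `c`
(`Nat.exists_eq_pow_of_pow_eq_pow`); for biprimes both powers must be trivial, so `a = b` and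
then `x = y`. Applied to `tower (a :: l) = a ^ tower l`, this peels off equal heads and leaves
equal towers of the tails.
-/

lemma Biprime.exponent_eq_one {a c k : ℕ} (ha : Biprime a) (h : a = c ^ k) : k = 1 := by
  obtain ⟨ha1, hpow⟩ := ha
  have hc : 1 < c := by
    by_contra! hc
    have : c ^ k ≤ 1 := pow_le_one₀ c.zero_le hc
    omega
  have hk : k ≠ 0 := by
    rintro rfl
    rw [pow_zero] at h
    omega
  by_contra hk1
  exact hpow ⟨c, k, hc, by omega, h.symm⟩

lemma Biprime.eq_and_eq_of_pow_eq_pow {a b x y : ℕ} (ha : Biprime a) (hb : Biprime b)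
    (hx : x ≠ 0) (h : a ^ x = b ^ y) : a = b ∧ x = y := by
  obtain ⟨c, hac, hbc⟩ := Nat.exists_eq_pow_of_pow_eq_pow (Or.inl hx) h
  have hy : y / Nat.gcd x y = 1 := ha.exponent_eq_one hac
  have hx' : x / Nat.gcd x y = 1 := hb.exponent_eq_one hbc
  have hab : a = b := by rw [hac, hbc, hx', hy]
  subst hab
  exact ⟨rfl, Nat.pow_right_injective ha.1 h⟩

lemma tower_pos {l : List ℕ} (h : ∀ a ∈ l, 0 < a) : 0 < tower l := by
  induction l with
  | nil => exact Nat.one_pos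
  | cons a t _ => exact Nat.pow_pos (h a List.mem_cons_self)

lemma one_lt_tower_cons {a : ℕ} {l : List ℕ} (h : ∀ b ∈ a :: l, 1 < b) :
    1 < tower (a :: l) :=
  Nat.one_lt_pow (tower_pos fun b hb => (h b (List.mem_cons_of_mem a hb)).pos).ne'
    (h a List.mem_cons_self)

lemma tower_injOn_biprime : Set.InjOn tower {l | ∀ a ∈ l, Biprime a} := by
  intro l₁ hl₁ l₂ hl₂ heq
  induction l₁ generalizing l₂ with
  | nil =>
    cases l₂ with
    | nil => rfl
    | cons b s => exact absurd heq (one_lt_tower_cons fun c hc => (hl₂ c hc).1).ne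
  | cons a t ih =>
    cases l₂ with
    | nil => exact absurd heq (one_lt_tower_cons fun c hc => (hl₁ c hc).1).ne'
    | cons b s =>
      have ht : ∀ c ∈ t, Biprime c := fun c hc => hl₁ c (List.mem_cons_of_mem a hc)
      have hs : ∀ c ∈ s, Biprime c := fun c hc => hl₂ c (List.mem_cons_of_mem b hc)
      obtain ⟨rfl, htower⟩ := (hl₁ a List.mem_cons_self).eq_and_eq_of_pow_eq_pow
        (hl₂ b List.mem_cons_self) (tower_pos fun c hc => (ht c hc).1.pos).ne' heq
      rw [ih ht hs htower]

theorem stmt3_general (l₁ l₂ : List ℕ)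
    (hb₁ : ∀ a ∈ l₁, Biprime a) (hb₂ : ∀ a ∈ l₂, Biprime a)
    (heq : tower l₁ = tower l₂) : l₁ = l₂ :=
  tower_injOn_biprime hb₁ hb₂ heq

theorem stmt3 (l₁ l₂ : List ℕ) (h₁ : l₁ ≠ []) (h₂ : l₂ ≠ [])
    (hb₁ : ∀ a ∈ l₁, Biprime a) (hb₂ : ∀ a ∈ l₂, Biprime a)
    (heq : tower l₁ = tower l₂) : l₁ = l₂ :=
  stmt3_general l₁ l₂ hb₁ hb₂ heq
end

section
/- If a_1, ..., a_s and b_1, ..., b_t are biprimes (all > 1) with a_1 ^ (a_2 ^ (⋯ ^ a_s)) = b_1 ^ (b_2 ^ (⋯ ^ b_t)), then a_1 = b_1. -/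
lemma tower_ne_zero {l : List ℕ} (h : ∀ x ∈ l, x ≠ 0) : tower l ≠ 0 := by
  cases l with
  | nil => simp [tower]
  | cons a l => exact pow_ne_zero _ (h a List.mem_cons_self)

lemma Biprime.eq_of_eq_pow {a c k : ℕ} (ha : Biprime a) (h : a = c ^ k) : a = c := by
  obtain ⟨ha1, hnot⟩ := ha
  rcases Nat.lt_trichotomy k 1 with hk | rfl | hk
  · simp [Nat.lt_one_iff.1 hk] at h
    omega
  · rw [h, pow_one]
  · have hc : 1 < c := (Nat.one_lt_pow_iff (by omega)).1 (h ▸ ha1)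
    exact absurd ⟨c, k, hc, hk, h.symm⟩ hnot

lemma Biprime.eq_of_pow_eq_pow {a b m n : ℕ} (ha : Biprime a) (hb : Biprime b) (hm : m ≠ 0)
    (h : a ^ m = b ^ n) : a = b := by
  obtain ⟨c, hac, hbc⟩ := Nat.exists_eq_pow_of_pow_eq_pow (.inl hm) h
  exact (ha.eq_of_eq_pow hac).trans (hb.eq_of_eq_pow hbc).symm

theorem stmt11_general (a b : ℕ) (la lb : List ℕ)
    (hba : Biprime a) (hbb : Biprime b)
    (ha : ∀ x ∈ la, Biprime x)
    (heq : tower (a :: la) = tower (b :: lb)) : a = b :=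
  hba.eq_of_pow_eq_pow hbb (tower_ne_zero fun x hx => Nat.ne_zero_of_lt (ha x hx).1) heq

theorem stmt11 (a b : ℕ) (la lb : List ℕ)
    (hba : Biprime a) (hbb : Biprime b)
    (ha : ∀ x ∈ la, Biprime x) (hb : ∀ x ∈ lb, Biprime x)
    (heq : tower (a :: la) = tower (b :: lb)) : a = b :=
  stmt11_general a b la lb hba hbb ha heq
end
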